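/- Let (A,C)_ψ be an entwining structure with a normalised integral map φ, let M, N be entwined modules and g : M → N a right A-module map. Then g̃(m) := g(m₍₀₎)₍₀₎ · m₍₁₎⁽²⁾ ⟨g(m₍₀₎)₍₁₎, m₍₁₎⁽¹⁾⟩ (where φ(c) = c⁽¹⁾⊗c⁽²⁾) defines a map that is both right A-linear and right C-colinear, i.e., a morphism of entwined modules. Moreover, if g is already a morphism of entwined modules, then g̃ = g. -/

import Mathlib

open TensorProduct LinearMap

noncomputable section

variable (k A C : Type*) [CommRing k] [Ring A] [Algebra k A]
  [AddCommGroup C] [Module k C] [Coalgebra k C]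

/-- An entwining structure `(A,C)_ψ` over `k`. -/
structure Entwining where
  psi : C ⊗[k] A →ₗ[k] A ⊗[k] C
  mul_compat :
    psi ∘ₗ lTensor C (LinearMap.mul' k A)
      = rTensor C (LinearMap.mul' k A)
        ∘ₗ (TensorProduct.assoc k A A C).symm.toLinearMap
        ∘ₗ lTensor A psi
        ∘ₗ (TensorProduct.assoc k A C A).toLinearMap
        ∘ₗ rTensor A psi
        ∘ₗ (TensorProduct.assoc k C A A).symm.toLinearMap
  one_compat : ∀ c : C, psi (c ⊗ₜ[k] (1 : A)) = (1 : A) ⊗ₜ[k] c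
  comul_compat :
    lTensor A (Coalgebra.comul (R := k) (A := C)) ∘ₗ psi
      = (TensorProduct.assoc k A C C).toLinearMap
        ∘ₗ rTensor C psi
        ∘ₗ (TensorProduct.assoc k C A C).symm.toLinearMap
        ∘ₗ lTensor C psi
        ∘ₗ (TensorProduct.assoc k C C A).toLinearMap
        ∘ₗ rTensor A (Coalgebra.comul (R := k) (A := C))
  counit_compat : ∀ (c : C) (a : A),
    (TensorProduct.rid k A)
        ((lTensor A (Coalgebra.counit (R := k) (A := C))) (psi (c ⊗ₜ[k] a)))
      = Coalgebra.counit (R := k) c • a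

variable {k A C} in
/-- `act` is a unital associative right `A`-action on `M`. -/
def IsRAction {M : Type*} [AddCommGroup M] [Module k M]
    (act : M ⊗[k] A →ₗ[k] M) : Prop :=
  (∀ m : M, act (m ⊗ₜ[k] (1 : A)) = m) ∧
  act ∘ₗ lTensor M (LinearMap.mul' k A)
    = act ∘ₗ rTensor A act ∘ₗ (TensorProduct.assoc k M A A).symm.toLinearMap

variable {k A C} in
/-- `coact` is a counital coassociative right `C`-coaction on `M`. -/
def IsRCoaction {M : Type*} [AddCommGroup M] [Module k M]
    (coact : M →ₗ[k] M ⊗[k] C) : Prop :=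
  (∀ m : M, (TensorProduct.rid k M)
      ((lTensor M (Coalgebra.counit (R := k) (A := C))) (coact m)) = m) ∧
  rTensor C coact ∘ₗ coact
    = (TensorProduct.assoc k M C C).symm.toLinearMap
      ∘ₗ lTensor M (Coalgebra.comul (R := k) (A := C)) ∘ₗ coact

variable {k A C} in
/-- The compatibility condition making `(M, act, coact)` an entwined
`(A,C)_ψ`-module: `ρ^M(m·a) = m₍₀₎·a_α ⊗ m₍₁₎^α`. -/
def IsEntwinedModule (E : Entwining k A C) {M : Type*} [AddCommGroup M] [Module k M]
    (act : M ⊗[k] A →ₗ[k] M) (coact : M →ₗ[k] M ⊗[k] C) : Prop :=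
  IsRAction act ∧ IsRCoaction coact ∧
  coact ∘ₗ act
    = rTensor C act
      ∘ₗ (TensorProduct.assoc k M A C).symm.toLinearMap
      ∘ₗ lTensor M E.psi
      ∘ₗ (TensorProduct.assoc k M C A).toLinearMap
      ∘ₗ rTensor A coact

variable {k A C} in
/-- A morphism of entwined modules: right `A`-linear and right `C`-colinear. -/
def IsEntwinedHom {M N : Type*} [AddCommGroup M] [Module k M]
    [AddCommGroup N] [Module k N]
    (actM : M ⊗[k] A →ₗ[k] M) (coactM : M →ₗ[k] M ⊗[k] C)
    (actN : N ⊗[k] A →ₗ[k] N) (coactN : N →ₗ[k] N ⊗[k] C)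
    (f : M →ₗ[k] N) : Prop :=
  (f ∘ₗ actM = actN ∘ₗ rTensor A f) ∧ (coactN ∘ₗ f = rTensor C f ∘ₗ coactM)

variable {k C} in
/-- The evaluation pairing `C ⊗ C* → k`. -/
def pairCD : C ⊗[k] Module.Dual k C →ₗ[k] k :=
  TensorProduct.lift (Module.Dual.eval k C)

variable {k A C} in
/-- `φ : C → C* ⊗ A` is a normalised integral map in `(A,C)_ψ`
(Definition 4.1 of the paper). -/
def IsNormalisedIntegralMap (E : Entwining k A C)
    (φ : C →ₗ[k] Module.Dual k C ⊗[k] A) : Prop :=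
  -- (1) `μ∘(A⊗ev_C⊗A)∘(ψ⊗φ)∘(C⊗ψ) = (ev_C⊗μ)∘(C⊗φ⊗A)`
  ((LinearMap.mul' k A)
    ∘ₗ lTensor A (TensorProduct.lid k A).toLinearMap
    ∘ₗ lTensor A (rTensor A (pairCD (k := k) (C := C)))
    ∘ₗ lTensor A (TensorProduct.assoc k C (Module.Dual k C) A).symm.toLinearMap
    ∘ₗ (TensorProduct.assoc k A C (Module.Dual k C ⊗[k] A)).toLinearMap
    ∘ₗ TensorProduct.map E.psi φ
    ∘ₗ (TensorProduct.assoc k C A C).symm.toLinearMap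
    ∘ₗ lTensor C E.psi
    = (TensorProduct.lid k A).toLinearMap
      ∘ₗ TensorProduct.map (pairCD (k := k) (C := C)) (LinearMap.mul' k A)
      ∘ₗ (TensorProduct.assoc k C (Module.Dual k C) (A ⊗[k] A)).symm.toLinearMap
      ∘ₗ lTensor C (TensorProduct.assoc k (Module.Dual k C) A A).toLinearMap
      ∘ₗ lTensor C (rTensor A φ)) ∧
  -- (2) `(ev_C⊗A⊗C)∘(C⊗φ⊗C)∘(C⊗Δ) = ψ∘(C⊗ev_C⊗A)∘(Δ⊗φ)`
  ((TensorProduct.lid k (A ⊗[k] C)).toLinearMap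
    ∘ₗ rTensor (A ⊗[k] C) (pairCD (k := k) (C := C))
    ∘ₗ (TensorProduct.assoc k C (Module.Dual k C) (A ⊗[k] C)).symm.toLinearMap
    ∘ₗ lTensor C (TensorProduct.assoc k (Module.Dual k C) A C).toLinearMap
    ∘ₗ lTensor C (rTensor C φ)
    ∘ₗ lTensor C (Coalgebra.comul (R := k) (A := C))
    = E.psi
      ∘ₗ lTensor C (TensorProduct.lid k A).toLinearMap
      ∘ₗ lTensor C (rTensor A (pairCD (k := k) (C := C)))
      ∘ₗ lTensor C (TensorProduct.assoc k C (Module.Dual k C) A).symm.toLinearMap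
      ∘ₗ (TensorProduct.assoc k C C (Module.Dual k C ⊗[k] A)).toLinearMap
      ∘ₗ TensorProduct.map (Coalgebra.comul (R := k) (A := C)) φ) ∧
  -- (3) `(ev_C⊗A)∘(C⊗φ)∘Δ = 1_A ∘ ε`
  ((TensorProduct.lid k A).toLinearMap
    ∘ₗ rTensor A (pairCD (k := k) (C := C))
    ∘ₗ (TensorProduct.assoc k C (Module.Dual k C) A).symm.toLinearMap
    ∘ₗ lTensor C φ
    ∘ₗ (Coalgebra.comul (R := k) (A := C))
    = (Algebra.linearMap k A) ∘ₗ (Coalgebra.counit (R := k) (A := C)))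

variable {k A C} in
/-- The averaged map `g̃ : M → N`,
`g̃(m) = g(m₍₀₎)₍₀₎ · m₍₁₎⁽²⁾ ⟨g(m₍₀₎)₍₁₎, m₍₁₎⁽¹⁾⟩` (Lemma 4.3). -/
def intAvg (φ : C →ₗ[k] Module.Dual k C ⊗[k] A)
    {M N : Type*} [AddCommGroup M] [Module k M] [AddCommGroup N] [Module k N]
    (actN : N ⊗[k] A →ₗ[k] N) (coactN : N →ₗ[k] N ⊗[k] C)
    (coactM : M →ₗ[k] M ⊗[k] C) (g : M →ₗ[k] N) : M →ₗ[k] N :=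
  actN
  ∘ₗ lTensor N (TensorProduct.lid k A).toLinearMap
  ∘ₗ lTensor N (rTensor A (pairCD (k := k) (C := C)))
  ∘ₗ lTensor N (TensorProduct.assoc k C (Module.Dual k C) A).symm.toLinearMap
  ∘ₗ (TensorProduct.assoc k N C (Module.Dual k C ⊗[k] A)).toLinearMap
  ∘ₗ TensorProduct.map (coactN ∘ₗ g) φ
  ∘ₗ coactM

/-!
Let `τ = averagingMap : N ⊗ C → N`, `n ⊗ c ↦ n₍₀₎ · ⟨n₍₁₎, c⁽¹⁾⟩ c⁽²⁾`, so that
`g̃ = τ ∘ (g ⊗ C) ∘ ρ^M`. Give `N ⊗ C` the action `(n ⊗ c) · a = n · a_α ⊗ c^α` and the cofree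
coaction `N ⊗ Δ`. Axiom (1) of the normalised integral map makes `τ` right `A`-linear, axiom (2)
makes it right `C`-colinear, and axiom (3) gives `τ ∘ ρ^N = id`. The map `(g ⊗ C) ∘ ρ^M` is
`A`-linear because `g` is and `M` is entwined, and colinear by coassociativity. Hence `g̃` is a
composite of morphisms of entwined modules, and if `g` is colinear then `g̃ = τ ∘ ρ^N ∘ g = g`.
-/

section Contraction

variable {k A C N : Type*} [CommRing k] [AddCommGroup A] [Module k A] [AddCommGroup C]
  [Module k C] [AddCommGroup N] [Module k N]

def dualContract : C ⊗[k] (Module.Dual k C ⊗[k] A) →ₗ[k] A :=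
  (TensorProduct.lid k A).toLinearMap ∘ₗ rTensor A pairCD
    ∘ₗ (TensorProduct.assoc k C (Module.Dual k C) A).symm.toLinearMap

@[simp]
theorem dualContract_tmul (c : C) (f : Module.Dual k C) (a : A) :
    dualContract (c ⊗ₜ[k] (f ⊗ₜ[k] a)) = f c • a := by
  simp [dualContract, pairCD]

variable (φ : C →ₗ[k] Module.Dual k C ⊗[k] A) (act : N ⊗[k] A →ₗ[k] N)
  (coact : N →ₗ[k] N ⊗[k] C)

/-- `c' ⊗ c ↦ ⟨c', c⁽¹⁾⟩ c⁽²⁾`, where `φ c = c⁽¹⁾ ⊗ c⁽²⁾`. -/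
def integralPairing : C ⊗[k] C →ₗ[k] A := dualContract ∘ₗ lTensor C φ

def averagingMap : N ⊗[k] C →ₗ[k] N :=
  act ∘ₗ lTensor N (integralPairing φ) ∘ₗ (TensorProduct.assoc k N C C).toLinearMap
    ∘ₗ rTensor C coact

theorem averagingMap_tmul (n : N) (c : C) :
    averagingMap φ act coact (n ⊗ₜ c)
      = act (lTensor N (integralPairing φ) (TensorProduct.assoc k N C C (coact n ⊗ₜ c))) :=
  rfl

theorem rTensor_averagingMap_assoc_symm_tmul (n : N) (d : C ⊗[k] C) :
    rTensor C (averagingMap φ act coact) ((TensorProduct.assoc k N C C).symm (n ⊗ₜ d))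
      = rTensor C act ((TensorProduct.assoc k N A C).symm
          (lTensor N (rTensor C (integralPairing φ)
              ∘ₗ (TensorProduct.assoc k C C C).symm.toLinearMap)
            (TensorProduct.assoc k N C (C ⊗[k] C) (coact n ⊗ₜ d)))) := by
  induction d using TensorProduct.induction_on with
  | zero => simp
  | add x y hx hy => simp only [tmul_add, map_add, hx, hy]
  | tmul c₁ c₂ =>
    simp only [assoc_symm_tmul, rTensor_tmul, averagingMap_tmul]
    induction coact n using TensorProduct.induction_on with
    | zero => simp
    | add x y hx hy => simp only [add_tmul, map_add, hx, hy]
    | tmul n' c' => simp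

end Contraction

section RightModules

variable {k A C M N P : Type*} [CommRing k] [Ring A] [Algebra k A] [AddCommGroup C] [Module k C]
  [AddCommGroup M] [Module k M] [AddCommGroup N] [Module k N] [AddCommGroup P] [Module k P]

theorem IsEntwinedHom.comp {actM : M ⊗[k] A →ₗ[k] M} {coactM : M →ₗ[k] M ⊗[k] C}
    {actN : N ⊗[k] A →ₗ[k] N} {coactN : N →ₗ[k] N ⊗[k] C}
    {actP : P ⊗[k] A →ₗ[k] P} {coactP : P →ₗ[k] P ⊗[k] C} {f : M →ₗ[k] N} {g : N →ₗ[k] P}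
    (hg : IsEntwinedHom actN coactN actP coactP g) (hf : IsEntwinedHom actM coactM actN coactN f) :
    IsEntwinedHom actM coactM actP coactP (g ∘ₗ f) := by
  constructor
  · rw [comp_assoc, hf.1, ← comp_assoc, hg.1, comp_assoc, rTensor_comp]
  · rw [← comp_assoc, hg.2, comp_assoc, hf.2, ← comp_assoc, rTensor_comp]

theorem IsRAction.act_comp_lTensor_algebraMap {act : M ⊗[k] A →ₗ[k] M} (h : IsRAction act) :
    act ∘ₗ lTensor M (Algebra.linearMap k A) = (TensorProduct.rid k M).toLinearMap := by
  ext m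
  simp [Algebra.algebraMap_eq_smul_one, h.1]

theorem IsRAction.act_act {act : M ⊗[k] A →ₗ[k] M} (h : IsRAction act) (m : M) (b a : A) :
    act (act (m ⊗ₜ b) ⊗ₜ a) = act (m ⊗ₜ (b * a)) := by
  simpa using congr($(h.2) (m ⊗ₜ (b ⊗ₜ a))).symm

theorem intAvg_eq_averagingMap_comp (φ : C →ₗ[k] Module.Dual k C ⊗[k] A)
    (actN : N ⊗[k] A →ₗ[k] N) (coactN : N →ₗ[k] N ⊗[k] C) (coactM : M →ₗ[k] M ⊗[k] C)
    (g : M →ₗ[k] N) :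
    intAvg φ actN coactN coactM g = averagingMap φ actN coactN ∘ₗ rTensor C g ∘ₗ coactM := by
  ext m
  simp only [intAvg, coe_comp, Function.comp_apply]
  induction coactM m using TensorProduct.induction_on with
  | zero => simp
  | add x y hx hy => simp only [map_add, hx, hy]
  | tmul m' c =>
    simp only [map_tmul, rTensor_tmul, averagingMap_tmul, coe_comp, Function.comp_apply]
    induction coactN (g m') using TensorProduct.induction_on with
    | zero => simp
    | add x y hx hy => simp only [add_tmul, map_add, hx, hy]
    | tmul n c' => simp [integralPairing, dualContract]

end RightModules

variable {k A C}

section EntwinedModules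

variable {E : Entwining k A C} {M N : Type*} [AddCommGroup M] [Module k M] [AddCommGroup N]
  [Module k N]

/-- `(m ⊗ c) · a = m · a_α ⊗ c^α`, where `ψ(c ⊗ a) = a_α ⊗ c^α`. -/
def Entwining.tensorAct (E : Entwining k A C) (act : M ⊗[k] A →ₗ[k] M) :
    (M ⊗[k] C) ⊗[k] A →ₗ[k] M ⊗[k] C :=
  rTensor C act ∘ₗ (TensorProduct.assoc k M A C).symm.toLinearMap ∘ₗ lTensor M E.psi
    ∘ₗ (TensorProduct.assoc k M C A).toLinearMap

@[simp]
theorem Entwining.tensorAct_tmul (E : Entwining k A C) (act : M ⊗[k] A →ₗ[k] M) (m : M) (c : C)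
    (a : A) :
    E.tensorAct act (m ⊗ₜ c ⊗ₜ a)
      = rTensor C act ((TensorProduct.assoc k M A C).symm (m ⊗ₜ E.psi (c ⊗ₜ a))) :=
  rfl

def cofreeCoact : M ⊗[k] C →ₗ[k] (M ⊗[k] C) ⊗[k] C :=
  (TensorProduct.assoc k M C C).symm.toLinearMap ∘ₗ lTensor M Coalgebra.comul

theorem IsRCoaction.rTensor_comp_coact {coact : M →ₗ[k] M ⊗[k] C} (h : IsRCoaction coact) :
    rTensor C coact ∘ₗ coact = cofreeCoact ∘ₗ coact := by
  rw [cofreeCoact, comp_assoc]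
  exact h.2

theorem IsRCoaction.rTensor_coact_coact {coact : M →ₗ[k] M ⊗[k] C} (h : IsRCoaction coact)
    (m : M) :
    rTensor C coact (coact m) = cofreeCoact (coact m) :=
  congr($(h.rTensor_comp_coact) m)

theorem IsEntwinedModule.coact_comp_act {act : M ⊗[k] A →ₗ[k] M}
    {coact : M →ₗ[k] M ⊗[k] C} (h : IsEntwinedModule E act coact) :
    coact ∘ₗ act = E.tensorAct act ∘ₗ rTensor A coact :=
  h.2.2

theorem IsEntwinedModule.coact_act {act : M ⊗[k] A →ₗ[k] M}
    {coact : M →ₗ[k] M ⊗[k] C} (h : IsEntwinedModule E act coact) (m : M) (a : A) :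
    coact (act (m ⊗ₜ a)) = E.tensorAct act (coact m ⊗ₜ a) :=
  congr($(h.coact_comp_act) (m ⊗ₜ a))

theorem cofreeCoact_comp_rTensor (f : M →ₗ[k] N) :
    cofreeCoact ∘ₗ rTensor C f = rTensor C (rTensor C f) ∘ₗ cofreeCoact := by
  refine TensorProduct.ext' fun m c => ?_
  simp only [cofreeCoact, coe_comp, LinearEquiv.coe_coe, Function.comp_apply, rTensor_tmul,
    lTensor_tmul]
  induction Coalgebra.comul (R := k) c using TensorProduct.induction_on with
  | zero => simp
  | add x y hx hy => simp only [tmul_add, map_add, hx, hy]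
  | tmul c₁ c₂ => simp

theorem rTensor_comp_tensorAct {actM : M ⊗[k] A →ₗ[k] M} {actN : N ⊗[k] A →ₗ[k] N}
    {g : M →ₗ[k] N} (hg : g ∘ₗ actM = actN ∘ₗ rTensor A g) :
    rTensor C g ∘ₗ E.tensorAct actM = E.tensorAct actN ∘ₗ rTensor A (rTensor C g) := by
  refine TensorProduct.ext_threefold fun m c a => ?_
  simp only [coe_comp, Function.comp_apply, rTensor_tmul, E.tensorAct_tmul]
  induction E.psi (c ⊗ₜ a) using TensorProduct.induction_on with
  | zero => simp
  | add x y hx hy => simp only [tmul_add, map_add, hx, hy]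
  | tmul a' c' =>
    simp only [assoc_symm_tmul, rTensor_tmul]
    rw [← comp_apply (f := g), hg, comp_apply, rTensor_tmul]

theorem rTensor_comp_coact_isEntwinedHom {actM : M ⊗[k] A →ₗ[k] M} {coactM : M →ₗ[k] M ⊗[k] C}
    {actN : N ⊗[k] A →ₗ[k] N} {g : M →ₗ[k] N}
    (hM : IsEntwinedModule E actM coactM) (hg : g ∘ₗ actM = actN ∘ₗ rTensor A g) :
    IsEntwinedHom actM coactM (E.tensorAct actN) cofreeCoact (rTensor C g ∘ₗ coactM) := by
  constructor
  · rw [comp_assoc, hM.coact_comp_act, ← comp_assoc, rTensor_comp_tensorAct hg, comp_assoc,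
      rTensor_comp]
  · rw [← comp_assoc, cofreeCoact_comp_rTensor, comp_assoc, ← hM.2.1.rTensor_comp_coact,
      ← comp_assoc, rTensor_comp]

end EntwinedModules

section Averaging

variable {φ : C →ₗ[k] Module.Dual k C ⊗[k] A} {E : Entwining k A C}

theorem integralPairing_comp_comul (hφ : IsNormalisedIntegralMap E φ) :
    integralPairing φ ∘ₗ Coalgebra.comul = Algebra.linearMap k A ∘ₗ Coalgebra.counit :=
  hφ.2.2

theorem mul'_lTensor_integralPairing_psi (hφ : IsNormalisedIntegralMap E φ) (c' c : C) (a : A) :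
    mul' k A (lTensor A (integralPairing φ) (TensorProduct.assoc k A C C
      (rTensor C E.psi ((TensorProduct.assoc k C A C).symm (c' ⊗ₜ E.psi (c ⊗ₜ a))))))
      = integralPairing φ (c' ⊗ₜ c) * a := by
  have h := congr($(hφ.1) (c' ⊗ₜ (c ⊗ₜ a)))
  simp only [coe_comp, LinearEquiv.coe_coe, Function.comp_apply, lTensor_tmul] at h
  convert h using 1
  · induction E.psi (c ⊗ₜ a) using TensorProduct.induction_on with
    | zero => simp
    | add x y hx hy => simp only [tmul_add, map_add, hx, hy]
    | tmul a' c'' =>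
      simp only [assoc_symm_tmul, rTensor_tmul, map_tmul]
      induction E.psi (c' ⊗ₜ a') using TensorProduct.induction_on with
      | zero => simp
      | add x y hx hy => simp only [add_tmul, map_add, hx, hy]
      | tmul a'' c''' => simp [integralPairing, dualContract]
  · simp only [integralPairing, coe_comp, Function.comp_apply, lTensor_tmul, rTensor_tmul]
    induction φ c using TensorProduct.induction_on with
    | zero => simp
    | add x y hx hy => simp only [tmul_add, add_tmul, map_add, add_mul, hx, hy]
    | tmul f b => simp [pairCD]

theorem psi_comp_lTensor_integralPairing (hφ : IsNormalisedIntegralMap E φ) :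
    E.psi ∘ₗ lTensor C (integralPairing φ) ∘ₗ (TensorProduct.assoc k C C C).toLinearMap
        ∘ₗ rTensor C Coalgebra.comul
      = rTensor C (integralPairing φ) ∘ₗ (TensorProduct.assoc k C C C).symm.toLinearMap
        ∘ₗ lTensor C Coalgebra.comul := by
  refine TensorProduct.ext' fun c' c => ?_
  have h := congr($(hφ.2.1) (c' ⊗ₜ c))
  simp only [coe_comp, LinearEquiv.coe_coe, Function.comp_apply, lTensor_tmul, map_tmul,
    rTensor_tmul] at h ⊢
  convert h.symm using 1
  · congr 1
    induction Coalgebra.comul (R := k) c' using TensorProduct.induction_on with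
    | zero => simp
    | add x y hx hy => simp only [add_tmul, map_add, hx, hy]
    | tmul c₁ c₂ => simp [integralPairing, dualContract]
  · induction Coalgebra.comul (R := k) c using TensorProduct.induction_on with
    | zero => simp
    | add x y hx hy => simp only [tmul_add, map_add, hx, hy]
    | tmul c₁ c₂ =>
      simp only [assoc_symm_tmul, rTensor_tmul, integralPairing, coe_comp, Function.comp_apply,
        lTensor_tmul]
      induction φ c₁ using TensorProduct.induction_on with
      | zero => simp
      | add x y hx hy => simp only [tmul_add, add_tmul, map_add, hx, hy]
      | tmul f b => simp [pairCD, smul_tmul']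

variable {N : Type*} [AddCommGroup N] [Module k N] {actN : N ⊗[k] A →ₗ[k] N}
  {coactN : N →ₗ[k] N ⊗[k] C}

theorem averagingMap_comp_coact (hφ : IsNormalisedIntegralMap E φ)
    (hN : IsEntwinedModule E actN coactN) :
    averagingMap φ actN coactN ∘ₗ coactN = LinearMap.id := by
  calc averagingMap φ actN coactN ∘ₗ coactN
      = actN ∘ₗ lTensor N (integralPairing φ ∘ₗ Coalgebra.comul) ∘ₗ coactN := by
        rw [averagingMap, lTensor_comp]
        simp only [comp_assoc, hN.2.1.rTensor_comp_coact]
        simp [cofreeCoact, ← comp_assoc]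
    _ = (TensorProduct.rid k N).toLinearMap ∘ₗ lTensor N Coalgebra.counit ∘ₗ coactN := by
        rw [integralPairing_comp_comul hφ, lTensor_comp, ← comp_assoc, ← comp_assoc,
          hN.1.act_comp_lTensor_algebraMap, comp_assoc]
    _ = LinearMap.id := LinearMap.ext hN.2.1.1

theorem averagingMap_comp_tensorAct (hφ : IsNormalisedIntegralMap E φ)
    (hN : IsEntwinedModule E actN coactN) :
    averagingMap φ actN coactN ∘ₗ E.tensorAct actN
      = actN ∘ₗ rTensor A (averagingMap φ actN coactN) := by
  -- `τ(n · a ⊗ c) = n₍₀₎ · a_α ⟨n₍₁₎^α, c⁽¹⁾⟩ c⁽²⁾`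
  have twist : ∀ (n : N) (z : A ⊗[k] C),
      averagingMap φ actN coactN (rTensor C actN ((TensorProduct.assoc k N A C).symm (n ⊗ₜ z)))
        = actN (lTensor N (mul' k A ∘ₗ lTensor A (integralPairing φ)
            ∘ₗ (TensorProduct.assoc k A C C).toLinearMap ∘ₗ rTensor C E.psi
            ∘ₗ (TensorProduct.assoc k C A C).symm.toLinearMap)
          (TensorProduct.assoc k N C (A ⊗[k] C) (coactN n ⊗ₜ z))) := by
    intro n z
    induction z using TensorProduct.induction_on with
    | zero => simp
    | add x y hx hy => simp only [tmul_add, map_add, hx, hy]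
    | tmul a c =>
      rw [assoc_symm_tmul, rTensor_tmul, averagingMap_tmul, hN.coact_act]
      induction coactN n using TensorProduct.induction_on with
      | zero => simp
      | add x y hx hy => simp only [add_tmul, map_add, hx, hy]
      | tmul n' c' =>
        simp only [E.tensorAct_tmul, assoc_tmul, assoc_symm_tmul, lTensor_tmul, rTensor_tmul,
          coe_comp, Function.comp_apply, LinearEquiv.coe_coe]
        induction E.psi (c' ⊗ₜ a) using TensorProduct.induction_on with
        | zero => simp
        | add x y hx hy => simp only [tmul_add, add_tmul, map_add, hx, hy]
        | tmul a' c'' => simp [hN.1.act_act]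
  refine TensorProduct.ext_threefold fun n c a => ?_
  simp only [coe_comp, Function.comp_apply, E.tensorAct_tmul, twist, rTensor_tmul,
    averagingMap_tmul]
  induction coactN n using TensorProduct.induction_on with
  | zero => simp
  | add x y hx hy => simp only [add_tmul, map_add, hx, hy]
  | tmul n' c' => simp [hN.1.act_act, ← mul'_lTensor_integralPairing_psi hφ]

theorem coact_averagingMap_tmul (hN : IsEntwinedModule E actN coactN) (n : N) (c : C) :
    coactN (averagingMap φ actN coactN (n ⊗ₜ c))
      = rTensor C actN ((TensorProduct.assoc k N A C).symm
          (lTensor N (E.psi ∘ₗ lTensor C (integralPairing φ)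
              ∘ₗ (TensorProduct.assoc k C C C).toLinearMap ∘ₗ rTensor C Coalgebra.comul)
            (TensorProduct.assoc k N C C (coactN n ⊗ₜ c)))) := by
  -- first in terms of `n₍₀₎₍₀₎ ⊗ n₍₀₎₍₁₎ ⊗ n₍₁₎`, then coassociativity
  have expand : coactN (averagingMap φ actN coactN (n ⊗ₜ c))
      = rTensor C actN ((TensorProduct.assoc k N A C).symm
          (lTensor N (E.psi ∘ₗ lTensor C (integralPairing φ)
              ∘ₗ (TensorProduct.assoc k C C C).toLinearMap)
            (TensorProduct.assoc k N (C ⊗[k] C) C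
              (TensorProduct.assoc k N C C (rTensor C coactN (coactN n)) ⊗ₜ c)))) := by
    rw [averagingMap_tmul]
    induction coactN n using TensorProduct.induction_on with
    | zero => simp
    | add x y hx hy => simp only [add_tmul, map_add, hx, hy]
    | tmul n' c' =>
      simp only [assoc_tmul, lTensor_tmul, rTensor_tmul, hN.coact_act]
      induction coactN n' using TensorProduct.induction_on with
      | zero => simp
      | add x y hx hy => simp only [add_tmul, map_add, hx, hy]
      | tmul n'' c'' => simp
  rw [expand, hN.2.1.rTensor_coact_coact]
  simp only [cofreeCoact, coe_comp, LinearEquiv.coe_coe, Function.comp_apply,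
    LinearEquiv.apply_symm_apply]
  induction coactN n using TensorProduct.induction_on with
  | zero => simp
  | add x y hx hy => simp only [add_tmul, map_add, hx, hy]
  | tmul n' c' => simp only [assoc_tmul, lTensor_tmul, rTensor_tmul, coe_comp, Function.comp_apply]

theorem coact_comp_averagingMap (hφ : IsNormalisedIntegralMap E φ)
    (hN : IsEntwinedModule E actN coactN) :
    coactN ∘ₗ averagingMap φ actN coactN
      = rTensor C (averagingMap φ actN coactN) ∘ₗ cofreeCoact := by
  refine TensorProduct.ext' fun n c => ?_
  simp only [coe_comp, Function.comp_apply, coact_averagingMap_tmul hN,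
    psi_comp_lTensor_integralPairing hφ, cofreeCoact, LinearEquiv.coe_coe, lTensor_tmul,
    rTensor_averagingMap_assoc_symm_tmul]
  induction coactN n using TensorProduct.induction_on with
  | zero => simp
  | add x y hx hy => simp only [add_tmul, map_add, hx, hy]
  | tmul n' c' => simp

end Averaging

/-- for a normalised integral map `φ` and a right `A`-linear
`g : M → N` between entwined modules, the averaged map `g̃` is a morphism of
entwined modules; if `g` is already such a morphism, then `g̃ = g`. -/
theorem intAvg_is_entwinedHom (E : Entwining k A C)
    (φ : C →ₗ[k] Module.Dual k C ⊗[k] A) (hφ : IsNormalisedIntegralMap E φ)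
    (M N : Type*) [AddCommGroup M] [Module k M] [AddCommGroup N] [Module k N]
    (actM : M ⊗[k] A →ₗ[k] M) (coactM : M →ₗ[k] M ⊗[k] C)
    (actN : N ⊗[k] A →ₗ[k] N) (coactN : N →ₗ[k] N ⊗[k] C)
    (hM : IsEntwinedModule E actM coactM) (hN : IsEntwinedModule E actN coactN)
    (g : M →ₗ[k] N) (hg : g ∘ₗ actM = actN ∘ₗ rTensor A g) :
    IsEntwinedHom actM coactM actN coactN (intAvg φ actN coactN coactM g) ∧
    (IsEntwinedHom actM coactM actN coactN g →
      intAvg φ actN coactN coactM g = g) := by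
  have hτ : IsEntwinedHom (E.tensorAct actN) cofreeCoact actN coactN
      (averagingMap φ actN coactN) :=
    ⟨averagingMap_comp_tensorAct hφ hN, coact_comp_averagingMap hφ hN⟩
  rw [intAvg_eq_averagingMap_comp]
  refine ⟨hτ.comp (rTensor_comp_coact_isEntwinedHom hM hg), fun hg' => ?_⟩
  rw [← hg'.2, ← comp_assoc, averagingMap_comp_coact hφ hN, id_comp]
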